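/- The map ρ makes F2[q_0, q_1, …] a comodule algebra over the doubled-up subalgebra P: (i) ρ(x) lies in the image of P ⊗[F2] M → A ⊗[F2] M for every x ∈ M; (ii) coassociativity holds, (ψ ⊗ id_M) ∘ ρ = (id_A ⊗ ρ) ∘ ρ as maps M → A ⊗[F2] A ⊗[F2] M; and (iii) counitality holds, (ε ⊗ id_M) ∘ ρ = id_M after the canonical identification F2 ⊗[F2] M ≅ M. -/

import Mathlib

open scoped TensorProduct

noncomputable section

abbrev F2 := ZMod 2

/-- The mod-2 dual Steenrod algebra as a polynomial algebra on ξ₁, ξ₂, …. -/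
abbrev A := MvPolynomial {n : ℕ // 1 ≤ n} F2

/-- The generators ξₙ, with the convention ξ₀ = 1. -/
def xi : ℕ → A
  | 0 => 1
  | n + 1 => MvPolynomial.X ⟨n + 1, by omega⟩

/-- The Milnor diagonal ψ(ξₙ) = Σ_{i=0}^{n} ξ_{n−i}^{2^i} ⊗ ξᵢ. -/
def ψ : A →ₐ[F2] A ⊗[F2] A :=
  MvPolynomial.aeval fun v =>
    ∑ i ∈ Finset.range (v.1 + 1), ((xi (v.1 - i)) ^ (2 ^ i)) ⊗ₜ[F2] xi i

/-- The augmentation ε(ξₙ) = 0 for n ≥ 1. -/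
def ε : A →ₐ[F2] F2 := MvPolynomial.aeval fun _ => 0

/-- The doubled-up subalgebra P generated by the ξₙ². -/
def P : Subalgebra F2 A := Algebra.adjoin F2 {x : A | ∃ n, 1 ≤ n ∧ x = xi n ^ 2}

/-- The polynomial algebra F2[q₀, q₁, …]. -/
abbrev M := MvPolynomial ℕ F2

/-- The coaction ρ(qₙ) = Σ_{i=0}^{n} ξ_{n−i}^{2^{i+1}} ⊗ qᵢ. -/
def ρ : M →ₐ[F2] A ⊗[F2] M :=
  MvPolynomial.aeval fun n =>
    ∑ i ∈ Finset.range (n + 1), ((xi (n - i)) ^ (2 ^ (i + 1))) ⊗ₜ[F2] (MvPolynomial.X i : M)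

/-!
Both identities are identities of algebra maps out of a polynomial algebra, so it suffices to
check them on the generators `q n`. In characteristic 2 Frobenius is additive, so
`ψ (ξₖ ^ 2 ^ m) = ∑ⱼ ξₖ₋ⱼ ^ 2 ^ (j + m) ⊗ ξⱼ ^ 2 ^ m`; with this, coassociativity on `q n` is the
reindexing `k = i + j` of a double sum, and counitality holds because `ε` kills every `ξₖ` with
`k ≥ 1`. The coefficients `ξₙ₋ᵢ ^ 2 ^ (i + 1)` of `ρ (q n)` are squares, hence lie in `P`, and the
image of `P ⊗ M` is a subalgebra, so it contains all of `ρ M`.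
-/

open Finset
open Algebra.TensorProduct (map_tmul assoc_tmul tmul_pow)

@[simp] lemma xi_zero : xi 0 = 1 := rfl

lemma ρ_X (n : ℕ) : ρ (MvPolynomial.X n) =
    ∑ i ∈ range (n + 1), (xi (n - i) ^ 2 ^ (i + 1)) ⊗ₜ[F2] (MvPolynomial.X i : M) :=
  MvPolynomial.aeval_X _ n

lemma ψ_xi (k : ℕ) : ψ (xi k) = ∑ j ∈ range (k + 1), (xi (k - j) ^ 2 ^ j) ⊗ₜ[F2] xi j := by
  cases k with
  | zero => simp [Algebra.TensorProduct.one_def]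
  | succ k => exact MvPolynomial.aeval_X _ _

lemma ε_xi (k : ℕ) : ε (xi k) = if k = 0 then 1 else 0 := by
  cases k with
  | zero => simp
  | succ k => simp [ε, xi]

lemma xi_pow_two_pow_succ_mem_P (k i : ℕ) : xi k ^ 2 ^ (i + 1) ∈ P := by
  rw [pow_succ', pow_mul]
  cases k with
  | zero => simp
  | succ k => exact pow_mem (Algebra.subset_adjoin ⟨k + 1, by omega, rfl⟩ : xi (k + 1) ^ 2 ∈ P) _

theorem Subalgebra.range_tensorProductMap_val_le_span {R S B : Type*} [CommSemiring R]
    [Semiring S] [Algebra R S] [Semiring B] [Algebra R B] (T : Subalgebra R S) :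
    Subalgebra.toSubmodule (Algebra.TensorProduct.map T.val (AlgHom.id R B)).range ≤
      Submodule.span R {z : S ⊗[R] B | ∃ a ∈ T, ∃ b : B, z = a ⊗ₜ[R] b} := by
  rintro _ ⟨y, rfl⟩
  induction y using TensorProduct.induction_on with
  | zero => rw [map_zero]; exact zero_mem _
  | tmul a b => exact Submodule.subset_span ⟨a, a.2, b, rfl⟩
  | add u v hu hv => rw [map_add]; exact add_mem hu hv

lemma range_ρ_le : ρ.range ≤ (Algebra.TensorProduct.map P.val (AlgHom.id F2 M)).range := by
  rw [← Algebra.map_top, ← MvPolynomial.adjoin_range_X, AlgHom.map_adjoin, Algebra.adjoin_le_iff]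
  rintro _ ⟨_, ⟨n, rfl⟩, rfl⟩
  rw [ρ_X]
  exact Subalgebra.sum_mem _ fun i _ =>
    ⟨(⟨_, xi_pow_two_pow_succ_mem_P (n - i) i⟩ : P) ⊗ₜ[F2] MvPolynomial.X i, rfl⟩

instance : CharP (A ⊗[F2] A) 2 := charP_of_injective_algebraMap' F2 2

lemma ψ_xi_pow_two_pow (k m : ℕ) :
    ψ (xi k ^ 2 ^ m) =
      ∑ j ∈ range (k + 1), (xi (k - j) ^ 2 ^ (j + m)) ⊗ₜ[F2] (xi j ^ 2 ^ m) := by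
  rw [map_pow, ψ_xi, sum_pow_char_pow]
  refine sum_congr rfl fun j _ => ?_
  rw [tmul_pow, ← pow_mul, ← pow_add]

lemma coassoc_ρ_X (n : ℕ) :
    Algebra.TensorProduct.assoc F2 F2 F2 A A M
        (Algebra.TensorProduct.map ψ (AlgHom.id F2 M) (ρ (MvPolynomial.X n))) =
      Algebra.TensorProduct.map (AlgHom.id F2 A) ρ (ρ (MvPolynomial.X n)) := by
  let f (i j : ℕ) : A ⊗[F2] (A ⊗[F2] M) :=
    (xi (n - i - j) ^ 2 ^ (j + (i + 1))) ⊗ₜ[F2] ((xi j ^ 2 ^ (i + 1)) ⊗ₜ[F2] MvPolynomial.X i)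
  simp only [ρ_X, map_sum, map_tmul, AlgHom.id_apply, ψ_xi_pow_two_pow, TensorProduct.sum_tmul,
    TensorProduct.tmul_sum, assoc_tmul]
  calc ∑ i ∈ range (n + 1), ∑ j ∈ range (n - i + 1), f i j
      = ∑ i ∈ range (n + 1), ∑ j ∈ range (n + 1 - i), f i j :=
        sum_congr rfl fun i hi => by rw [Nat.sub_add_comm (mem_range_succ_iff.mp hi)]
    _ = ∑ k ∈ range (n + 1), ∑ i ∈ range (k + 1), f i (k - i) := (sum_range_diag_flip _ f).symm
    _ = _ := sum_congr rfl fun k hk => sum_congr rfl fun i hi => by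
        rw [mem_range] at hk hi
        dsimp only [f]
        congr 3 <;> omega

lemma counit_ρ_X (n : ℕ) :
    Algebra.TensorProduct.lid F2 M
        (Algebra.TensorProduct.map ε (AlgHom.id F2 M) (ρ (MvPolynomial.X n))) =
      MvPolynomial.X n := by
  rw [ρ_X, map_sum, map_sum, sum_eq_single_of_mem n (self_mem_range_succ n)]
  · simp
  · intro i hi hne
    rw [mem_range] at hi
    simp [ε_xi, show n - i ≠ 0 by omega]

/-- ρ makes F2[q₀, q₁, …] a comodule algebra over the doubled-up subalgebra P:
the coaction lands in (the image of) P ⊗ M, is coassociative, and is counital. -/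
theorem rho_comodule_algebra :
    (∀ x : M, ρ x ∈
      Submodule.span F2 {z : A ⊗[F2] M | ∃ a ∈ P, ∃ m : M, z = a ⊗ₜ[F2] m}) ∧
    ((Algebra.TensorProduct.assoc F2 F2 F2 A A M).toAlgHom.comp
        ((Algebra.TensorProduct.map ψ (AlgHom.id F2 M)).comp ρ) =
      (Algebra.TensorProduct.map (AlgHom.id F2 A) ρ).comp ρ) ∧
    ((Algebra.TensorProduct.lid F2 M).toAlgHom.comp
        ((Algebra.TensorProduct.map ε (AlgHom.id F2 M)).comp ρ) = AlgHom.id F2 M) :=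
  ⟨fun x => P.range_tensorProductMap_val_le_span (range_ρ_le ⟨x, rfl⟩),
    MvPolynomial.algHom_ext coassoc_ρ_X, MvPolynomial.algHom_ext counit_ρ_X⟩
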